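/- arXiv:2006.12120 — 7 statements merged into one kernel-verified Lean document; each statement's English description precedes it below -/
import Mathlib

section
/- Define f_{S,x}(z) = (1/2) F(z)ᵀ H_S(x) F(z) where H_S(x) = S (Sᵀ DF(x)ᵀ DF(x) S)† Sᵀ. Then the gradient of f_{S,x} at the point z = x satisfies ‖∇f_{S,x}(x)‖² = 2 f_{S,x}(x). -/
open Matrix

/-- Uniqueness of the Moore–Penrose pseudoinverse. -/
lemma penrose_unique {n : ℕ} (A B C : Matrix (Fin n) (Fin n) ℝ)
    (hB1 : A * B * A = A) (hB2 : B * A * B = B)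
    (hB3 : (A * B)ᵀ = A * B) (hB4 : (B * A)ᵀ = B * A)
    (hC1 : A * C * A = A) (hC2 : C * A * C = C)
    (hC3 : (A * C)ᵀ = A * C) (hC4 : (C * A)ᵀ = C * A) :
    B = C := by
  have hAB : A * B = A * C := by
    calc A * B = (A * C * A) * B := by rw [hC1]
      _ = (A * C) * (A * B) := by noncomm_ring
      _ = (A * C)ᵀ * (A * B)ᵀ := by rw [hC3, hB3]
      _ = Cᵀ * (A * B * A)ᵀ := by
          simp only [Matrix.transpose_mul]; noncomm_ring
      _ = Cᵀ * Aᵀ := by rw [hB1]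
      _ = (A * C)ᵀ := by rw [Matrix.transpose_mul]
      _ = A * C := hC3
  have hBA : B * A = C * A := by
    calc B * A = B * (A * C * A) := by rw [hC1]
      _ = (B * A) * (C * A) := by noncomm_ring
      _ = (B * A)ᵀ * (C * A)ᵀ := by rw [hC4, hB4]
      _ = (A * B * A)ᵀ * Cᵀ := by
          simp only [Matrix.transpose_mul]; noncomm_ring
      _ = Aᵀ * Cᵀ := by rw [hB1]
      _ = (C * A)ᵀ := by rw [Matrix.transpose_mul]
      _ = C * A := hC4
  calc B = B * A * B := hB2.symm
    _ = B * (A * C) := by rw [mul_assoc, hAB]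
    _ = (C * A) * C := by rw [← mul_assoc, hBA]
    _ = C := by rw [hC2]

/-- With `H = S Mdag Sᵀ` (where `Mdag` is the Moore–Penrose pseudoinverse of
`M = Sᵀ Jᵀ J S`, `J = DF(x)`), the gradient `∇f_{S,x}(x) = J H F(x)` of
`f_{S,x}(z) = (1/2) F(z)ᵀ H F(z)` at `z = x` satisfies `‖∇f_{S,x}(x)‖² = 2 f_{S,x}(x)`. -/
theorem norm_sq_grad_eq_two_f {p m τ : ℕ}
    (J : Matrix (Fin p) (Fin m) ℝ) (S : Matrix (Fin m) (Fin τ) ℝ)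
    (Fx : Fin m → ℝ)
    (Mdag : Matrix (Fin τ) (Fin τ) ℝ)
    (hpen1 : (Sᵀ * Jᵀ * J * S) * Mdag * (Sᵀ * Jᵀ * J * S) = Sᵀ * Jᵀ * J * S)
    (hpen2 : Mdag * (Sᵀ * Jᵀ * J * S) * Mdag = Mdag)
    (hpen3 : ((Sᵀ * Jᵀ * J * S) * Mdag)ᵀ = (Sᵀ * Jᵀ * J * S) * Mdag)
    (hpen4 : (Mdag * (Sᵀ * Jᵀ * J * S))ᵀ = Mdag * (Sᵀ * Jᵀ * J * S)) :
    (J *ᵥ ((S * Mdag * Sᵀ) *ᵥ Fx)) ⬝ᵥ (J *ᵥ ((S * Mdag * Sᵀ) *ᵥ Fx))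
      = 2 * ((1 / 2 : ℝ) * (Fx ⬝ᵥ ((S * Mdag * Sᵀ) *ᵥ Fx))) := by
  set A := Sᵀ * Jᵀ * J * S with hAdef
  have hA : Aᵀ = A := by
    rw [hAdef]; simp [Matrix.transpose_mul, Matrix.mul_assoc]
  -- Mdagᵀ also satisfies the four Penrose conditions, so Mdag is symmetric.
  have hsym : Mdag = Mdagᵀ := by
    refine penrose_unique A Mdag Mdagᵀ hpen1 hpen2 hpen3 hpen4 ?_ ?_ ?_ ?_
    · have := congrArg Matrix.transpose hpen1
      simpa [Matrix.transpose_mul, hA, Matrix.mul_assoc] using this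
    · have := congrArg Matrix.transpose hpen2
      simpa [Matrix.transpose_mul, hA, Matrix.mul_assoc] using this
    · calc (A * Mdagᵀ)ᵀ = Mdag * Aᵀ := by simp [Matrix.transpose_mul]
        _ = Mdag * A := by rw [hA]
        _ = (Mdag * A)ᵀ := hpen4.symm
        _ = Aᵀ * Mdagᵀ := by simp [Matrix.transpose_mul]
        _ = A * Mdagᵀ := by rw [hA]
    · calc (Mdagᵀ * A)ᵀ = Aᵀ * Mdag := by simp [Matrix.transpose_mul]
        _ = A * Mdag := by rw [hA]
        _ = (A * Mdag)ᵀ := hpen3.symm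
        _ = Mdagᵀ * Aᵀ := by simp [Matrix.transpose_mul]
        _ = Mdagᵀ * A := by rw [hA]
  -- key matrix identity
  have key : (J * (S * Mdag * Sᵀ))ᵀ * (J * (S * Mdag * Sᵀ)) = S * Mdag * Sᵀ := by
    have h2 : (Mdag * A * Mdag) * Sᵀ = Mdag * Sᵀ := by rw [hpen2]
    calc (J * (S * Mdag * Sᵀ))ᵀ * (J * (S * Mdag * Sᵀ))
        = S * ((Mdag * A * Mdag) * Sᵀ) := by
          rw [hAdef]
          simp only [Matrix.transpose_mul, Matrix.transpose_transpose, ← hsym, Matrix.mul_assoc]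
      _ = S * (Mdag * Sᵀ) := by rw [h2]
      _ = S * Mdag * Sᵀ := by rw [Matrix.mul_assoc]
  have aux : ∀ (M : Matrix (Fin p) (Fin m) ℝ) (x : Fin m → ℝ),
      (M *ᵥ x) ⬝ᵥ (M *ᵥ x) = x ⬝ᵥ ((Mᵀ * M) *ᵥ x) := by
    intro M x
    calc (M *ᵥ x) ⬝ᵥ (M *ᵥ x) = (x ᵥ* Mᵀ) ⬝ᵥ (M *ᵥ x) := by rw [Matrix.vecMul_transpose]
      _ = x ⬝ᵥ (Mᵀ *ᵥ (M *ᵥ x)) := by rw [← Matrix.dotProduct_mulVec]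
      _ = x ⬝ᵥ ((Mᵀ * M) *ᵥ x) := by rw [Matrix.mulVec_mulVec]
  calc (J *ᵥ ((S * Mdag * Sᵀ) *ᵥ Fx)) ⬝ᵥ (J *ᵥ ((S * Mdag * Sᵀ) *ᵥ Fx))
      = ((J * (S * Mdag * Sᵀ)) *ᵥ Fx) ⬝ᵥ ((J * (S * Mdag * Sᵀ)) *ᵥ Fx) := by
        rw [Matrix.mulVec_mulVec]
    _ = Fx ⬝ᵥ ((S * Mdag * Sᵀ) *ᵥ Fx) := by rw [aux, key]
    _ = 2 * ((1 / 2 : ℝ) * (Fx ⬝ᵥ ((S * Mdag * Sᵀ) *ᵥ Fx))) := by ring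
end

section
/- For matrices W and G with G symmetric positive semi-definite, if Ker(G) ⊆ Ker(W) then Ker(Wᵀ) = Ker(W G Wᵀ). -/
open Matrix

/-- For matrices `W` and `G` with `G` symmetric positive semi-definite,
if `Ker(G) ⊆ Ker(W)` then `Ker(Wᵀ) = Ker(W G Wᵀ)`. -/
theorem ker_transpose_eq_ker_WGWt {a b : ℕ}
    (W : Matrix (Fin a) (Fin b) ℝ) (G : Matrix (Fin b) (Fin b) ℝ)
    (hG : G.PosSemidef)
    (hker : LinearMap.ker G.mulVecLin ≤ LinearMap.ker W.mulVecLin) :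
    LinearMap.ker (Wᵀ).mulVecLin = LinearMap.ker (W * G * Wᵀ).mulVecLin := by
  ext x
  simp only [LinearMap.mem_ker, mulVecLin_apply]
  constructor
  · intro h
    rw [← mulVec_mulVec, ← mulVec_mulVec, h, mulVec_zero, mulVec_zero]
  · intro h
    set y := Wᵀ *ᵥ x with hy
    have hGy : G *ᵥ y = 0 := by
      have h1 : star y ⬝ᵥ G *ᵥ y = 0 := by
        have : y ⬝ᵥ G *ᵥ y = x ⬝ᵥ (W * G * Wᵀ) *ᵥ x := by
          rw [← mulVec_mulVec, ← mulVec_mulVec, hy, dotProduct_mulVec x,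
            ← mulVec_transpose]
        simpa [star, h] using this.trans (by rw [h, dotProduct_zero])
      exact (hG.dotProduct_mulVec_zero_iff y).mp h1
    have hWy : W *ᵥ y = 0 := hker (by simpa [LinearMap.mem_ker, mulVecLin_apply] using hGy)
    have h2 : y ⬝ᵥ y = 0 := by
      have : x ⬝ᵥ W *ᵥ y = y ⬝ᵥ y := by
        rw [dotProduct_mulVec x, ← mulVec_transpose, hy]
      rw [← this, hWy, dotProduct_zero]
    exact (dotProduct_self_eq_zero).mp h2
end

section
/- (Sketched Newton–Raphson as SGD, sublinear rate) Let x^{k+1} = x^k − γ ∇f_{S_k,x^k}(x^k), where f_{S,y}(x) = (1/2)‖F(x)‖²_{H_S(y)}, and suppose F(x*) = 0 and the star-convexity condition f_k(x*) ≥ f_k(x^k) + ⟨∇f_k(x^k), x* − x^k⟩ holds at every iterate x^k, where f_k = E_{S∼D_{x^k}}[f_{S,x^k}]. If 0 < γ < 1, then E[min_{t<k} f_t(x^t)] ≤ (1/k) · ‖x^0 − x*‖² / (2γ(1 − γ)). -/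
open MeasureTheory
open scoped RealInnerProductSpace

/-- SNR as online SGD, sublinear rate under star-convexity.
Here `x k` are the random iterates, `g k ω = ∇f_{S_k,x^k}(x^k)(ω)` the stochastic gradients,
`d k ω = ∇f_k(x^k)(ω)` the full gradients of `f_k = E_{S∼D_{x^k}}[f_{S,x^k}]`, and
`φ k ω = f_k(x^k)(ω)`.  The hypotheses encode the SNR/SGD update, `f_k(x*) = 0` (since
`F(x*) = 0`), star-convexity of `f_k` along the iterates, the tower property
`E⟨x^k − x*, g_k⟩ = E⟨x^k − x*, ∇f_k(x^k)⟩`, and the gratuitous smoothness identity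
`E‖g_k‖² = 2 E[f_k(x^k)]`.  Conclusion: for `0 < γ < 1`,
`E[min_{t<k} f_t(x^t)] ≤ (1/k)·‖x⁰ − x*‖²/(2γ(1−γ))`. -/
theorem snr_sublinear_star_convex {p : ℕ} {Ω : Type*} [MeasurableSpace Ω]
    (μ : Measure Ω) [IsProbabilityMeasure μ]
    (γ : ℝ) (hγ0 : 0 < γ) (hγ1 : γ < 1)
    (x g d : ℕ → Ω → EuclideanSpace ℝ (Fin p))
    (φ : ℕ → Ω → ℝ)
    (x0 xstar : EuclideanSpace ℝ (Fin p))
    (hx0 : ∀ ω, x 0 ω = x0)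
    (hupdate : ∀ k ω, x (k + 1) ω = x k ω - γ • g k ω)
    (hφnonneg : ∀ k ω, 0 ≤ φ k ω)
    (hφint : ∀ k, Integrable (φ k) μ)
    (hgint : ∀ k, Integrable (fun ω => ‖g k ω‖ ^ 2) μ)
    (hinner_g_int : ∀ k, Integrable (fun ω => ⟪x k ω - xstar, g k ω⟫) μ)
    (hinner_d_int : ∀ k, Integrable (fun ω => ⟪x k ω - xstar, d k ω⟫) μ)
    (htower : ∀ k, ∫ ω, ⟪x k ω - xstar, g k ω⟫ ∂μ = ∫ ω, ⟪x k ω - xstar, d k ω⟫ ∂μ)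
    (hstar : ∀ k ω, φ k ω + ⟪d k ω, xstar - x k ω⟫ ≤ 0)
    (hsmooth : ∀ k, ∫ ω, ‖g k ω‖ ^ 2 ∂μ = 2 * ∫ ω, φ k ω ∂μ)
    (k : ℕ) (hk : 0 < k) :
    ∫ ω, (Finset.range k).inf' (Finset.nonempty_range_iff.mpr hk.ne') (fun t => φ t ω) ∂μ
      ≤ (1 / (k : ℝ)) * (‖x0 - xstar‖ ^ 2 / (2 * γ * (1 - γ))) := by
  -- pointwise expansion of the update
  have hpt : ∀ n ω, ‖x (n + 1) ω - xstar‖ ^ 2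
      = ‖x n ω - xstar‖ ^ 2 - 2 * γ * ⟪x n ω - xstar, g n ω⟫ + γ ^ 2 * ‖g n ω‖ ^ 2 := by
    intro n ω
    rw [hupdate n ω, show x n ω - γ • g n ω - xstar = (x n ω - xstar) - γ • g n ω by abel]
    rw [norm_sub_sq_real, real_inner_smul_right, norm_smul]
    simp [mul_pow, abs_of_pos hγ0]
    ring
  -- integrability of ‖x n - x*‖²
  have hxint : ∀ n, Integrable (fun ω => ‖x n ω - xstar‖ ^ 2) μ := by
    intro n
    induction n with
    | zero => simpa [hx0] using (integrable_const (‖x0 - xstar‖ ^ 2) (μ := μ))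
    | succ n ih =>
        have : Integrable (fun ω => ‖x n ω - xstar‖ ^ 2 - 2 * γ * ⟪x n ω - xstar, g n ω⟫
            + γ ^ 2 * ‖g n ω‖ ^ 2) μ :=
          (ih.sub ((hinner_g_int n).const_mul _)).add ((hgint n).const_mul _)
        exact this.congr (Filter.Eventually.of_forall fun ω => (hpt n ω).symm)
  set A : ℕ → ℝ := fun n => ∫ ω, ‖x n ω - xstar‖ ^ 2 ∂μ with hA
  have hrec : ∀ n, A (n + 1) ≤ A n - 2 * γ * (1 - γ) * ∫ ω, φ n ω ∂μ := by
    intro n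
    have h1 : A (n + 1) = A n - 2 * γ * ∫ ω, ⟪x n ω - xstar, g n ω⟫ ∂μ
        + γ ^ 2 * ∫ ω, ‖g n ω‖ ^ 2 ∂μ := by
      have heq := integral_congr_ae (μ := μ) (Filter.Eventually.of_forall (hpt n))
      have hf : Integrable (fun ω => ‖x n ω - xstar‖ ^ 2
          - 2 * γ * ⟪x n ω - xstar, g n ω⟫) μ :=
        (hxint n).sub ((hinner_g_int n).const_mul _)
      have e1 : ∫ ω, (‖x n ω - xstar‖ ^ 2 - 2 * γ * ⟪x n ω - xstar, g n ω⟫)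
            + γ ^ 2 * ‖g n ω‖ ^ 2 ∂μ
          = (∫ ω, ‖x n ω - xstar‖ ^ 2 - 2 * γ * ⟪x n ω - xstar, g n ω⟫ ∂μ)
            + ∫ ω, γ ^ 2 * ‖g n ω‖ ^ 2 ∂μ := integral_add hf ((hgint n).const_mul _)
      have e2 : ∫ ω, ‖x n ω - xstar‖ ^ 2 - 2 * γ * ⟪x n ω - xstar, g n ω⟫ ∂μ
          = (∫ ω, ‖x n ω - xstar‖ ^ 2 ∂μ)
            - ∫ ω, 2 * γ * ⟪x n ω - xstar, g n ω⟫ ∂μ :=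
        integral_sub (hxint n) ((hinner_g_int n).const_mul _)
      rw [hA]
      simp only [heq, e1, e2, integral_const_mul]
    have h2 : ∫ ω, φ n ω ∂μ ≤ ∫ ω, ⟪x n ω - xstar, d n ω⟫ ∂μ := by
      refine integral_mono (hφint n) (hinner_d_int n) fun ω => ?_
      have := hstar n ω
      have h3 : ⟪d n ω, xstar - x n ω⟫ = - ⟪x n ω - xstar, d n ω⟫ := by
        rw [real_inner_comm]
        rw [show xstar - x n ω = -(x n ω - xstar) by abel, inner_neg_left]
      linarith
    rw [h1, hsmooth n, htower n]
    nlinarith [h2]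
  -- summing the recursion
  have hAnonneg : ∀ n, 0 ≤ A n :=
    fun n => integral_nonneg fun ω => by positivity
  have hsum' : ∀ n, 2 * γ * (1 - γ) * ∑ t ∈ Finset.range n, ∫ ω, φ t ω ∂μ ≤ A 0 - A n := by
    intro n
    induction n with
    | zero => simp
    | succ n ih =>
        have := hrec n
        rw [Finset.sum_range_succ]
        nlinarith
  have hsum : 2 * γ * (1 - γ) * ∑ t ∈ Finset.range k, ∫ ω, φ t ω ∂μ ≤ ‖x0 - xstar‖ ^ 2 := by
    have hA0 : A 0 = ‖x0 - xstar‖ ^ 2 := by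
      simp [hA, hx0]
    calc 2 * γ * (1 - γ) * ∑ t ∈ Finset.range k, ∫ ω, φ t ω ∂μ
        ≤ A 0 - A k := hsum' k
      _ ≤ A 0 := by linarith [hAnonneg k]
      _ = ‖x0 - xstar‖ ^ 2 := hA0
  -- the min is integrable
  set m : Ω → ℝ := fun ω => (Finset.range k).inf'
      (Finset.nonempty_range_iff.mpr hk.ne') (fun t => φ t ω) with hm
  have hmle : ∀ t ∈ Finset.range k, ∀ ω, m ω ≤ φ t ω := by
    intro t ht ω
    exact Finset.inf'_le _ ht
  have hmnonneg : ∀ ω, 0 ≤ m ω := by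
    intro ω
    exact Finset.le_inf' _ _ fun t _ => hφnonneg t ω
  have hmint : Integrable m μ := by
    have hmeas : AEStronglyMeasurable m μ := by
      have key : ∀ (s : Finset ℕ) (hs : s.Nonempty),
          AEStronglyMeasurable (fun ω => s.inf' hs fun t => φ t ω) μ := by
        intro s hs
        induction hs using Finset.Nonempty.cons_induction with
        | singleton a => simpa using (hφint a).aestronglyMeasurable
        | cons a s ha hs ih =>
            have h2 : AEStronglyMeasurable
                (fun ω => φ a ω ⊓ s.inf' hs fun t => φ t ω) μ :=
              (hφint a).aestronglyMeasurable.inf ih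
            exact h2.congr (Filter.Eventually.of_forall fun ω =>
              (Finset.inf'_cons (H := hs) (fun t => φ t ω)).symm)
      exact key _ _
    refine Integrable.mono (hφint 0) hmeas ?_
    filter_upwards with ω
    rw [Real.norm_eq_abs, Real.norm_eq_abs, abs_of_nonneg (hmnonneg ω),
      abs_of_nonneg (hφnonneg 0 ω)]
    exact hmle 0 (Finset.mem_range.mpr hk) ω
  -- k * ∫ m ≤ Σ ∫ φ t
  have hkm : (k : ℝ) * ∫ ω, m ω ∂μ ≤ ∑ t ∈ Finset.range k, ∫ ω, φ t ω ∂μ := by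
    have : ∀ t ∈ Finset.range k, ∫ ω, m ω ∂μ ≤ ∫ ω, φ t ω ∂μ :=
      fun t ht => integral_mono hmint (hφint t) fun ω => hmle t ht ω
    calc (k : ℝ) * ∫ ω, m ω ∂μ = ∑ _t ∈ Finset.range k, ∫ ω, m ω ∂μ := by
          simp [Finset.sum_const, nsmul_eq_mul]
      _ ≤ ∑ t ∈ Finset.range k, ∫ ω, φ t ω ∂μ := Finset.sum_le_sum this
  have hc : 0 < 2 * γ * (1 - γ) := by nlinarith
  have hkpos : (0 : ℝ) < k := Nat.cast_pos.mpr hk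
  have hrhs : (1 / (k : ℝ)) * (‖x0 - xstar‖ ^ 2 / (2 * γ * (1 - γ)))
      = ‖x0 - xstar‖ ^ 2 / ((k : ℝ) * (2 * γ * (1 - γ))) := by
    field_simp
  rw [hrhs, le_div_iff₀ (by positivity)]
  calc (∫ ω, m ω ∂μ) * ((k : ℝ) * (2 * γ * (1 - γ)))
      = 2 * γ * (1 - γ) * ((k : ℝ) * ∫ ω, m ω ∂μ) := by ring
    _ ≤ 2 * γ * (1 - γ) * ∑ t ∈ Finset.range k, ∫ ω, φ t ω ∂μ := by
        exact mul_le_mul_of_nonneg_left hkm hc.le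
    _ ≤ ‖x0 - xstar‖ ^ 2 := hsum
end

section
/- (Monotone iterates under per-sketch star-convexity) Under the SNR iteration x^{k+1} = x^k − γ ∇f_{S_k,x^k}(x^k) with 0 < γ < 1, if for each sketching matrix the per-realization star-convexity f_{S_k,x^k}(x*) ≥ f_{S_k,x^k}(x^k) + ⟨∇f_{S_k,x^k}(x^k), x* − x^k⟩ holds with F(x*) = 0, then ‖x^k − x*‖ ≤ ‖x^0 − x*‖ for all k (deterministically, for every realization). -/
open Matrix

lemma pinv_symm' {n : ℕ} (M D : Matrix (Fin n) (Fin n) ℝ) (hM : Mᵀ = M)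
    (h1 : M*D*M = M) (h2 : D*M*D = D) (h3 : (M*D)ᵀ = M*D) (h4 : (D*M)ᵀ = D*M) :
    Dᵀ = D := by
  have hMB : M * Dᵀ = D * M := by
    calc M * Dᵀ = (D * M)ᵀ := by rw [Matrix.transpose_mul, hM]
    _ = D * M := h4
  have hBM : Dᵀ * M = M * D := by
    calc Dᵀ * M = (M * D)ᵀ := by rw [Matrix.transpose_mul, hM]
    _ = M * D := h3
  have hXsym : (M * Dᵀ)ᵀ = M * Dᵀ := by rw [hMB, h4]
  have hMDM' : M * Dᵀ * M = M := by
    calc M * Dᵀ * M = (M*D*M)ᵀ := by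
          rw [Matrix.transpose_mul, Matrix.transpose_mul, hM]; noncomm_ring
    _ = M := by rw [h1, hM]
  have hYX : (M*D)*(M*Dᵀ) = D*M := by
    calc (M*D)*(M*Dᵀ) = (M*D*M)*Dᵀ := by noncomm_ring
    _ = M*Dᵀ := by rw [h1]
    _ = D*M := hMB
  have hcomm : M*D = D*M := by
    calc M*D = (M*Dᵀ*M)*D := by rw [hMDM']
    _ = (M*Dᵀ)*(M*D) := by noncomm_ring
    _ = (M*Dᵀ)ᵀ*(M*D)ᵀ := by rw [hXsym, h3]
    _ = ((M*D)*(M*Dᵀ))ᵀ := (Matrix.transpose_mul _ _).symm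
    _ = (D*M)ᵀ := by rw [hYX]
    _ = D*M := h4
  calc Dᵀ = Dᵀ * M * Dᵀ := by
        have h := congrArg Matrix.transpose h2
        rw [Matrix.transpose_mul, Matrix.transpose_mul, hM] at h
        rw [mul_assoc]; exact h.symm
  _ = (M*D)*Dᵀ := by rw [hBM]
  _ = (D*M)*Dᵀ := by rw [hcomm]
  _ = D*(M*Dᵀ) := by rw [mul_assoc]
  _ = D*(M*D) := by rw [hMB, ← hcomm]
  _ = D := by rw [← mul_assoc, h2]

lemma dot_mulVec_same' {a b : ℕ} (B : Matrix (Fin a) (Fin b) ℝ) (u v : Fin b → ℝ) :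
    (B *ᵥ u) ⬝ᵥ (B *ᵥ v) = u ⬝ᵥ ((Bᵀ*B) *ᵥ v) := by
  rw [dotProduct_comm, dotProduct_mulVec, ← mulVec_transpose, mulVec_mulVec, dotProduct_comm,
    dotProduct_mulVec, ← mulVec_transpose]

/-- monotone distance under per-sketch star-convexity.
SNR iterates `x^{k+1} = x^k − γ ∇f_{S_k,x^k}(x^k)` with
`∇f_{S_k,x^k}(x^k) = DF(x^k) H_k F(x^k)`, `H_k = S_k Mdag_k S_kᵀ` and `Mdag_k` the
Moore–Penrose pseudoinverse of `M_k = S_kᵀ DF(x^k)ᵀ DF(x^k) S_k`.  If `F(x*) = 0` and the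
per-realization star-convexity
`f_{S_k,x^k}(x*) ≥ f_{S_k,x^k}(x^k) + ⟨∇f_{S_k,x^k}(x^k), x* − x^k⟩` holds, with
`0 < γ < 1`, then `‖x^k − x*‖ ≤ ‖x^0 − x*‖` for every `k` (deterministically). -/
theorem snr_iterates_bounded {p m τ : ℕ}
    (F : (Fin p → ℝ) → (Fin m → ℝ))
    (J : (Fin p → ℝ) → Matrix (Fin p) (Fin m) ℝ)
    (S : ℕ → Matrix (Fin m) (Fin τ) ℝ)
    (Mdag : ℕ → Matrix (Fin τ) (Fin τ) ℝ)
    (γ : ℝ) (hγ0 : 0 < γ) (hγ1 : γ < 1)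
    (x : ℕ → Fin p → ℝ) (xstar : Fin p → ℝ)
    (hFstar : F xstar = 0)
    (hpen1 : ∀ k, ((S k)ᵀ * (J (x k))ᵀ * J (x k) * S k) * Mdag k *
        ((S k)ᵀ * (J (x k))ᵀ * J (x k) * S k) = (S k)ᵀ * (J (x k))ᵀ * J (x k) * S k)
    (hpen2 : ∀ k, Mdag k * ((S k)ᵀ * (J (x k))ᵀ * J (x k) * S k) * Mdag k = Mdag k)
    (hpen3 : ∀ k, (((S k)ᵀ * (J (x k))ᵀ * J (x k) * S k) * Mdag k)ᵀ =
        ((S k)ᵀ * (J (x k))ᵀ * J (x k) * S k) * Mdag k)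
    (hpen4 : ∀ k, (Mdag k * ((S k)ᵀ * (J (x k))ᵀ * J (x k) * S k))ᵀ =
        Mdag k * ((S k)ᵀ * (J (x k))ᵀ * J (x k) * S k))
    (hupdate : ∀ k, x (k + 1) =
        x k - γ • (J (x k) *ᵥ ((S k * Mdag k * (S k)ᵀ) *ᵥ F (x k))))
    (hstar : ∀ k,
        (1 / 2 : ℝ) * (F xstar ⬝ᵥ ((S k * Mdag k * (S k)ᵀ) *ᵥ F xstar)) ≥
        (1 / 2 : ℝ) * (F (x k) ⬝ᵥ ((S k * Mdag k * (S k)ᵀ) *ᵥ F (x k))) +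
          (J (x k) *ᵥ ((S k * Mdag k * (S k)ᵀ) *ᵥ F (x k))) ⬝ᵥ (xstar - x k)) :
    ∀ k, (x k - xstar) ⬝ᵥ (x k - xstar) ≤ (x 0 - xstar) ⬝ᵥ (x 0 - xstar) := by
  have hstep : ∀ k, (x (k+1) - xstar) ⬝ᵥ (x (k+1) - xstar) ≤
      (x k - xstar) ⬝ᵥ (x k - xstar) := by
    intro k
    set A := S k with hA
    set D := Mdag k with hDdef
    set Jk := J (x k) with hJ
    set Fk := F (x k) with hF
    set M : Matrix (Fin τ) (Fin τ) ℝ := Aᵀ * Jkᵀ * Jk * A with hMdef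
    set H : Matrix (Fin m) (Fin m) ℝ := A * D * Aᵀ with hH
    set g : Fin p → ℝ := Jk *ᵥ (H *ᵥ Fk) with hg
    set u : Fin p → ℝ := x k - xstar with hu
    set φ : ℝ := Fk ⬝ᵥ (H *ᵥ Fk) with hφ
    -- symmetry of M
    have hMsym : Mᵀ = M := by
      rw [hMdef]
      simp [Matrix.transpose_mul, Matrix.mul_assoc]
    have hDsym : Dᵀ = D :=
      pinv_symm' M D hMsym (hpen1 k) (hpen2 k) (hpen3 k) (hpen4 k)
    -- H is symmetric and H (JᵀJ) H = H
    have hHsym : Hᵀ = H := by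
      rw [hH, Matrix.transpose_mul, Matrix.transpose_mul, Matrix.transpose_transpose, hDsym,
        Matrix.mul_assoc]
    have hHJH : Hᵀ * (Jkᵀ * Jk) * H = H := by
      rw [hHsym, hH]
      calc (A * D * Aᵀ) * (Jkᵀ * Jk) * (A * D * Aᵀ)
          = A * (D * (Aᵀ * Jkᵀ * Jk * A) * D) * Aᵀ := by simp only [Matrix.mul_assoc]
      _ = A * D * Aᵀ := by rw [← hMdef, hpen2 k, Matrix.mul_assoc]
    -- norm of gradient equals 2 f
    have hgg : g ⬝ᵥ g = φ := by
      rw [hg, mulVec_mulVec, dot_mulVec_same', Matrix.transpose_mul, hφ]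
      congr 1
      rw [show Hᵀ * Jkᵀ * (Jk * H) = Hᵀ * (Jkᵀ * Jk) * H by simp only [Matrix.mul_assoc], hHJH]
    have hφ0 : 0 ≤ φ := by
      rw [← hgg]; exact Finset.sum_nonneg fun i _ => mul_self_nonneg (g i)
    -- star-convexity consequence
    have hs := hstar k
    rw [hFstar] at hs
    rw [← hA, ← hDdef, ← hJ, ← hF] at hs
    have hs' : (0 : ℝ) ≥ (1/2) * φ + g ⬝ᵥ (xstar - x k) := by
      simpa [hφ, hg, hH, hu, Matrix.mul_assoc] using hs
    have hneg : g ⬝ᵥ (xstar - x k) = -(g ⬝ᵥ u) := by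
      rw [hu, show xstar - x k = -(x k - xstar) from (neg_sub _ _).symm, dotProduct_neg]
    have hgu : φ / 2 ≤ g ⬝ᵥ u := by rw [hneg] at hs'; linarith
    -- expand the square
    have hxx : x (k+1) - xstar = u - γ • g := by
      rw [hupdate k, hu, hg, hH, hA, hDdef, hJ, hF, sub_right_comm]
    rw [hxx]
    have hexp : (u - γ • g) ⬝ᵥ (u - γ • g)
        = u ⬝ᵥ u - 2 * γ * (g ⬝ᵥ u) + γ * γ * (g ⬝ᵥ g) := by
      simp only [sub_dotProduct, dotProduct_sub, smul_dotProduct, dotProduct_smul, smul_eq_mul,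
        dotProduct_comm u g]
      ring
    rw [hexp, hgg]
    nlinarith [mul_le_mul_of_nonneg_left hgu hγ0.le,
      mul_nonneg (mul_nonneg hγ0.le (sub_pos.mpr hγ1).le) hφ0]
  intro k
  induction k with
  | zero => exact le_refl _
  | succ n ih => exact le_trans (hstep n) ih
end

section
/- (Equivalence of reformulation) Assume there exists x* with F(x*) = 0, and that F(ℝ^p) ∩ Ker(E_{S∼D_y}[H_S(y)]) = {0} for all y. Then for every y, the set of global minimizers of f_y(x) = (1/2)‖F(x)‖²_{E[H_S(y)]} is exactly {x : F(x) = 0}. -/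
/-!
A positive semidefinite quadratic form is nonnegative, and it vanishes at `F x*`, so its minimum
value is `0` and the minimizers are exactly its zeros. For a positive semidefinite `A`,
`vᵀ A v = 0` forces `A v = 0`; the kernel condition then leaves only `F x = 0`.
-/

open Matrix

theorem Matrix.PosSemidef.dotProduct_mulVec_self_eq_zero_iff {n : Type*} [Fintype n]
    {A : Matrix n n ℝ} (hA : A.PosSemidef) (v : n → ℝ) :
    v ⬝ᵥ (A *ᵥ v) = 0 ↔ A *ᵥ v = 0 := by
  simpa using hA.dotProduct_mulVec_zero_iff v

theorem setOf_forall_le_eq_setOf_eq_zero {α : Type*} {f : α → ℝ} (hf : ∀ x, 0 ≤ f x)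
    (hzero : ∃ x, f x = 0) : {x | ∀ z, f x ≤ f z} = {x | f x = 0} := by
  obtain ⟨x₀, hx₀⟩ := hzero
  ext x
  exact ⟨fun hmin => le_antisymm (hx₀ ▸ hmin x₀) (hf x), fun hx z => hx ▸ hf z⟩

/-- equivalence of the reformulation.  If there exists `x*` with `F(x*) = 0`
and `F(ℝ^p) ∩ Ker(E[H_S(y)]) = {0}` for all `y`, then for every `y` the set of global
minimizers of `f_y(x) = (1/2)‖F(x)‖²_{E[H_S(y)]}` is exactly `{x : F(x) = 0}`. -/
theorem reformulation_equivalence {p m : ℕ}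
    (F : (Fin p → ℝ) → (Fin m → ℝ))
    (EH : (Fin p → ℝ) → Matrix (Fin m) (Fin m) ℝ)
    (hEH : ∀ y, (EH y).PosSemidef)
    (hex : ∃ xstar, F xstar = 0)
    (hker : ∀ (y : Fin p → ℝ) (v : Fin m → ℝ), (∃ z, F z = v) → EH y *ᵥ v = 0 → v = 0) :
    ∀ y : Fin p → ℝ,
      {x : Fin p → ℝ | ∀ z, (1 / 2 : ℝ) * (F x ⬝ᵥ (EH y *ᵥ F x))
          ≤ (1 / 2 : ℝ) * (F z ⬝ᵥ (EH y *ᵥ F z))}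
        = {x : Fin p → ℝ | F x = 0} := by
  intro y
  set f : (Fin p → ℝ) → ℝ := fun x => (1 / 2 : ℝ) * (F x ⬝ᵥ (EH y *ᵥ F x))
  have hf_nonneg : ∀ x, 0 ≤ f x := fun x =>
    mul_nonneg (by norm_num) ((hEH y).dotProduct_mulVec_nonneg (F x))
  have hf_eq_zero_iff : ∀ x, f x = 0 ↔ F x = 0 := by
    intro x
    simp only [f, mul_eq_zero, one_div, inv_eq_zero, OfNat.ofNat_ne_zero, false_or,
      (hEH y).dotProduct_mulVec_self_eq_zero_iff]
    exact ⟨hker y (F x) ⟨x, rfl⟩, fun hx => by rw [hx, mulVec_zero]⟩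
  obtain ⟨xstar, hxstar⟩ := hex
  calc {x | ∀ z, f x ≤ f z}
      = {x | f x = 0} :=
        setOf_forall_le_eq_setOf_eq_zero hf_nonneg ⟨xstar, (hf_eq_zero_iff xstar).mpr hxstar⟩
    _ = {x | F x = 0} := Set.ext hf_eq_zero_iff
end

section
/- (Adapted sketches give image inclusion) Suppose F(x) ∈ Im(DF(x)ᵀ) and the sketch S ∼ D_x satisfies Ker(E[SSᵀ]) ⊆ Ker(DF(x)) ⊆ Ker(Sᵀ) for all realizations S. Then Ker(E[H_S(x)]) ⊆ Ker(DF(x)), and hence F(x) ∈ Im(DF(x)ᵀ) ⊆ Im(E[H_S(x)]). -/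
open Matrix MeasureTheory

/-!
Each `H ω = S M† Sᵀ` is positive semidefinite: `M = (JS)ᵀ(JS)` is symmetric, so by uniqueness
its Moore–Penrose inverse `M†` is symmetric too, and `M† = M† M M† = (JS M†)ᵀ(JS M†)`. Moreover
`Ker M† ⊆ Ker M = Ker(JS) ⊆ Ker S` by adaptedness, whence `Ker H ω = Ker Sᵀ`. If `E[H] v = 0`
then the nonnegative quadratic form `vᵀ H v` has zero expectation, so `v ∈ Ker Sᵀ` almost
surely, so `E[S Sᵀ] v = 0` and `J v = 0`. Finally `E[H]` is symmetric, so
`Im Jᵀ = (Ker J)ᗮ ⊆ (Ker E[H])ᗮ = Im E[H]`.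
-/

namespace Matrix

structure IsMoorePenroseInverse {R m n : Type*} [CommRing R] [Fintype m] [Fintype n]
    (A : Matrix m n R) (X : Matrix n m R) : Prop where
  mul_mul_self : A * X * A = A
  mul_mul_self' : X * A * X = X
  mul_symm : (A * X)ᵀ = A * X
  mul_symm' : (X * A)ᵀ = X * A

namespace IsMoorePenroseInverse

variable {R m n : Type*} [CommRing R] [Fintype m] [Fintype n] {A : Matrix m n R}
  {X Y : Matrix n m R}

theorem transpose (h : IsMoorePenroseInverse A X) : IsMoorePenroseInverse Aᵀ Xᵀ where
  mul_mul_self := by simp only [← transpose_mul, ← Matrix.mul_assoc, h.mul_mul_self]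
  mul_mul_self' := by simp only [← transpose_mul, ← Matrix.mul_assoc, h.mul_mul_self']
  mul_symm := by rw [← transpose_mul, transpose_transpose, h.mul_symm']
  mul_symm' := by rw [← transpose_mul, transpose_transpose, h.mul_symm]

theorem unique (hX : IsMoorePenroseInverse A X) (hY : IsMoorePenroseInverse A Y) : X = Y := by
  have hAX : A * X = A * Y :=
    calc A * X = (A * Y * (A * X))ᵀ := by rw [← Matrix.mul_assoc, hY.mul_mul_self, hX.mul_symm]
      _ = A * X * (A * Y) := by rw [Matrix.transpose_mul, hX.mul_symm, hY.mul_symm]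
      _ = A * Y := by rw [← Matrix.mul_assoc, hX.mul_mul_self]
  have hXA : X * A = Y * A :=
    calc X * A = (X * A * (Y * A))ᵀ := by
          rw [Matrix.mul_assoc, ← Matrix.mul_assoc A, hY.mul_mul_self, hX.mul_symm']
      _ = Y * A * (X * A) := by rw [Matrix.transpose_mul, hX.mul_symm', hY.mul_symm']
      _ = Y * A := by rw [Matrix.mul_assoc, ← Matrix.mul_assoc A, hX.mul_mul_self]
  calc X = X * (A * X) := by rw [← Matrix.mul_assoc, hX.mul_mul_self']
    _ = Y * A * Y := by rw [hAX, ← Matrix.mul_assoc, hXA]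
    _ = Y := hY.mul_mul_self'

theorem transpose_eq_self {A : Matrix n n R} {X : Matrix n n R} (hA : Aᵀ = A)
    (h : IsMoorePenroseInverse A X) : Xᵀ = X :=
  (hA ▸ h.transpose).unique h

theorem ker_le_ker_transpose (h : IsMoorePenroseInverse A X) :
    LinearMap.ker X.mulVecLin ≤ LinearMap.ker Aᵀ.mulVecLin := by
  intro v hv
  have hAt : Aᵀ * A * X = Aᵀ := by
    conv_rhs => rw [← h.mul_mul_self, Matrix.transpose_mul, h.mul_symm]
    simp only [Matrix.mul_assoc]
  simp only [LinearMap.mem_ker, mulVecLin_apply] at hv ⊢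
  rw [← hAt, ← mulVec_mulVec, hv, mulVec_zero]

end IsMoorePenroseInverse

section OrderedField

variable {R l m n : Type*} [Field R] [LinearOrder R] [IsStrictOrderedRing R]
  [Fintype m] [Fintype n]

theorem ker_mul_le_of_ker_le_ker_transpose {J : Matrix l m R} {S : Matrix m n R}
    (h : LinearMap.ker J.mulVecLin ≤ LinearMap.ker Sᵀ.mulVecLin) :
    LinearMap.ker (J * S).mulVecLin ≤ LinearMap.ker S.mulVecLin := by
  intro u hu
  rw [← ker_mulVecLin_transpose_mul_self]
  simp only [LinearMap.mem_ker, mulVecLin_apply, ← mulVec_mulVec] at hu ⊢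
  exact h hu

theorem IsMoorePenroseInverse.ker_le_ker_of_transpose_mul_self {B : Matrix m n R}
    {X : Matrix n n R} (h : IsMoorePenroseInverse (Bᵀ * B) X) :
    LinearMap.ker X.mulVecLin ≤ LinearMap.ker B.mulVecLin := by
  simpa only [Matrix.transpose_mul, transpose_transpose, ker_mulVecLin_transpose_mul_self]
    using h.ker_le_ker_transpose

theorem isCompl_range_transpose_ker (B : Matrix m n R) :
    IsCompl (LinearMap.range Bᵀ.mulVecLin) (LinearMap.ker B.mulVecLin) := by
  refine (Submodule.isCompl_iff_disjoint _ _ ?_).mpr ?_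
  · have := LinearMap.finrank_range_add_finrank_ker B.mulVecLin
    rw [← rank, ← rank_transpose, rank] at this
    exact this.ge
  · rw [Submodule.disjoint_def]
    rintro _ ⟨u, rfl⟩ hu
    have : u ∈ LinearMap.ker (Bᵀᵀ * Bᵀ).mulVecLin := by
      simpa only [LinearMap.mem_ker, mulVecLin_apply, transpose_transpose, ← mulVec_mulVec]
        using hu
    rwa [ker_mulVecLin_transpose_mul_self] at this

theorem range_transpose_le_range_transpose_of_ker_le [Fintype l] {A : Matrix l n R}
    {B : Matrix m n R}
    (h : LinearMap.ker B.mulVecLin ≤ LinearMap.ker A.mulVecLin) :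
    LinearMap.range Aᵀ.mulVecLin ≤ LinearMap.range Bᵀ.mulVecLin := by
  rintro _ ⟨u, rfl⟩
  obtain ⟨_, ⟨w, rfl⟩, b, hb, hsum⟩ :=
    Submodule.mem_sup.mp ((isCompl_range_transpose_ker B).sup_eq_top ▸
      Submodule.mem_top (x := Aᵀ.mulVecLin u))
  have hBb : B *ᵥ b = 0 := hb
  have hAb : A *ᵥ b = 0 := h hb
  -- `b` is orthogonal to `Aᵀ u` and to `Bᵀ w`, hence to itself
  have hbb : b ⬝ᵥ b = 0 := by
    simpa only [mulVecLin_apply, dotProduct_add, dotProduct_mulVec, vecMul_transpose, hAb, hBb,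
      zero_dotProduct, zero_add] using congrArg (b ⬝ᵥ ·) hsum
  rw [← hsum, dotProduct_self_eq_zero.mp hbb, add_zero]
  exact ⟨w, rfl⟩

end OrderedField

section Real

variable {m n : Type*} [Fintype m] [Fintype n]

theorem IsMoorePenroseInverse.posSemidef_of_transpose_mul_self {B : Matrix m n ℝ}
    {X : Matrix n n ℝ} (h : IsMoorePenroseInverse (Bᵀ * B) X) : X.PosSemidef := by
  have hX : Xᵀ = X :=
    h.transpose_eq_self (by rw [Matrix.transpose_mul, transpose_transpose])
  have : X = (B * X)ᴴ * (B * X) := by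
    rw [conjTranspose_eq_transpose_of_trivial, Matrix.transpose_mul, hX]
    conv_lhs => rw [← h.mul_mul_self']
    simp only [Matrix.mul_assoc]
  rw [this]
  exact posSemidef_conjTranspose_mul_self _

theorem ker_mul_mul_transpose {G : Matrix n n ℝ} (hG : G.PosSemidef) {W : Matrix m n ℝ}
    (h : LinearMap.ker G.mulVecLin ≤ LinearMap.ker W.mulVecLin) :
    LinearMap.ker (W * G * Wᵀ).mulVecLin = LinearMap.ker Wᵀ.mulVecLin := by
  refine le_antisymm (fun v hv ↦ ?_) (fun v hv ↦ ?_)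
  · rw [LinearMap.mem_ker, mulVecLin_apply] at hv
    have hGw : G *ᵥ (Wᵀ *ᵥ v) = 0 := by
      have hq : (Wᵀ *ᵥ v) ⬝ᵥ (G *ᵥ (Wᵀ *ᵥ v)) = v ⬝ᵥ ((W * G * Wᵀ) *ᵥ v) := by
        rw [← mulVec_mulVec, ← mulVec_mulVec, dotProduct_mulVec v W, ← mulVec_transpose]
      rw [← hG.dotProduct_mulVec_zero_iff, star_trivial, hq, hv, dotProduct_zero]
    have : v ∈ LinearMap.ker (Wᵀᵀ * Wᵀ).mulVecLin := by
      simpa only [LinearMap.mem_ker, mulVecLin_apply, transpose_transpose, ← mulVec_mulVec]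
        using h hGw
    rwa [ker_mulVecLin_transpose_mul_self] at this
  · simp only [LinearMap.mem_ker, mulVecLin_apply] at hv ⊢
    rw [← mulVec_mulVec, hv, mulVec_zero]

theorem posSemidef_mul_mul_transpose {G : Matrix n n ℝ} (hG : G.PosSemidef) (W : Matrix m n ℝ) :
    (W * G * Wᵀ).PosSemidef := by
  simpa only [conjTranspose_eq_transpose_of_trivial] using hG.mul_mul_conjTranspose_same W

end Real

section Integral

variable {Ω m n : Type*} [MeasurableSpace Ω] [Fintype n]

noncomputable def entrywiseIntegral (μ : Measure Ω) (H : Ω → Matrix m n ℝ) : Matrix m n ℝ :=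
  of fun i j ↦ ∫ ω, H ω i j ∂μ

variable {μ : Measure Ω} {H : Ω → Matrix m n ℝ}

theorem integrable_mulVec_apply (hH : ∀ i j, Integrable (fun ω ↦ H ω i j) μ) (v : n → ℝ)
    (i : m) : Integrable (fun ω ↦ (H ω *ᵥ v) i) μ :=
  integrable_finsetSum _ fun j _ ↦ (hH i j).mul_const (v j)

theorem entrywiseIntegral_mulVec (hH : ∀ i j, Integrable (fun ω ↦ H ω i j) μ) (v : n → ℝ) :
    entrywiseIntegral μ H *ᵥ v = fun i ↦ ∫ ω, (H ω *ᵥ v) i ∂μ := by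
  funext i
  simp only [mulVec, dotProduct, entrywiseIntegral, of_apply]
  rw [integral_finsetSum _ fun j _ ↦ (hH i j).mul_const (v j)]
  simp only [integral_mul_const]

theorem entrywiseIntegral_mulVec_eq_zero (hH : ∀ i j, Integrable (fun ω ↦ H ω i j) μ)
    {v : n → ℝ} (hv : ∀ᵐ ω ∂μ, H ω *ᵥ v = 0) : entrywiseIntegral μ H *ᵥ v = 0 := by
  rw [entrywiseIntegral_mulVec hH]
  funext i
  exact (integral_congr_ae (hv.mono fun ω h ↦ congrFun h i)).trans (integral_zero Ω ℝ)

theorem dotProduct_entrywiseIntegral_mulVec [Fintype m]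
    (hH : ∀ i j, Integrable (fun ω ↦ H ω i j) μ) (u : m → ℝ) (v : n → ℝ) :
    u ⬝ᵥ (entrywiseIntegral μ H *ᵥ v) = ∫ ω, u ⬝ᵥ (H ω *ᵥ v) ∂μ := by
  simp only [entrywiseIntegral_mulVec hH, dotProduct]
  rw [integral_finsetSum _ fun i _ ↦ (integrable_mulVec_apply hH v i).const_mul (u i)]
  simp only [integral_const_mul]

theorem integrable_dotProduct_mulVec [Fintype m]
    (hH : ∀ i j, Integrable (fun ω ↦ H ω i j) μ) (u : m → ℝ) (v : n → ℝ) :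
    Integrable (fun ω ↦ u ⬝ᵥ (H ω *ᵥ v)) μ :=
  integrable_finsetSum _ fun i _ ↦ (integrable_mulVec_apply hH v i).const_mul (u i)

variable {H : Ω → Matrix n n ℝ}

theorem posSemidef_entrywiseIntegral (hH : ∀ i j, Integrable (fun ω ↦ H ω i j) μ)
    (hpsd : ∀ ω, (H ω).PosSemidef) : (entrywiseIntegral μ H).PosSemidef := by
  refine .of_dotProduct_mulVec_nonneg ?_ fun v ↦ ?_
  · ext i j
    exact integral_congr_ae (.of_forall fun ω ↦ (hpsd ω).isHermitian.apply i j)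
  · rw [star_trivial, dotProduct_entrywiseIntegral_mulVec hH]
    exact integral_nonneg fun ω ↦ by simpa using (hpsd ω).dotProduct_mulVec_nonneg v

theorem ae_mulVec_eq_zero_of_entrywiseIntegral_mulVec_eq_zero
    (hH : ∀ i j, Integrable (fun ω ↦ H ω i j) μ) (hpsd : ∀ ω, (H ω).PosSemidef) {v : n → ℝ}
    (hv : entrywiseIntegral μ H *ᵥ v = 0) : ∀ᵐ ω ∂μ, H ω *ᵥ v = 0 := by
  have hnonneg : 0 ≤ fun ω ↦ v ⬝ᵥ (H ω *ᵥ v) := fun ω ↦ by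
    simpa using (hpsd ω).dotProduct_mulVec_nonneg v
  have hzero : ∫ ω, v ⬝ᵥ (H ω *ᵥ v) ∂μ = 0 := by
    rw [← dotProduct_entrywiseIntegral_mulVec hH, hv, dotProduct_zero]
  filter_upwards [(integral_eq_zero_iff_of_nonneg hnonneg
    (integrable_dotProduct_mulVec hH v v)).mp hzero] with ω hω
  rw [← (hpsd ω).dotProduct_mulVec_zero_iff, star_trivial]
  exact hω

end Integral

end Matrix

theorem adapted_sketch_image_inclusion_general {p m τ : ℕ} {Ω : Type*} [MeasurableSpace Ω]
    (μ : Measure Ω)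
    (J : Matrix (Fin p) (Fin m) ℝ) (Fx : Fin m → ℝ)
    (S : Ω → Matrix (Fin m) (Fin τ) ℝ)
    (Mdag : Ω → Matrix (Fin τ) (Fin τ) ℝ)
    (hpen1 : ∀ ω, ((S ω)ᵀ * Jᵀ * J * S ω) * Mdag ω * ((S ω)ᵀ * Jᵀ * J * S ω)
        = (S ω)ᵀ * Jᵀ * J * S ω)
    (hpen2 : ∀ ω, Mdag ω * ((S ω)ᵀ * Jᵀ * J * S ω) * Mdag ω = Mdag ω)
    (hpen3 : ∀ ω, (((S ω)ᵀ * Jᵀ * J * S ω) * Mdag ω)ᵀ = ((S ω)ᵀ * Jᵀ * J * S ω) * Mdag ω)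
    (hpen4 : ∀ ω, (Mdag ω * ((S ω)ᵀ * Jᵀ * J * S ω))ᵀ = Mdag ω * ((S ω)ᵀ * Jᵀ * J * S ω))
    (hSint : ∀ i j, Integrable (fun ω => (S ω * (S ω)ᵀ) i j) μ)
    (hHint : ∀ i j, Integrable (fun ω => (S ω * Mdag ω * (S ω)ᵀ) i j) μ)
    (hF : Fx ∈ LinearMap.range (Jᵀ).mulVecLin)
    (hadapt1 : LinearMap.ker (Matrix.of fun i j => ∫ ω, (S ω * (S ω)ᵀ) i j ∂μ).mulVecLin
        ≤ LinearMap.ker J.mulVecLin)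
    (hadapt2 : ∀ ω, LinearMap.ker J.mulVecLin ≤ LinearMap.ker ((S ω)ᵀ).mulVecLin) :
    LinearMap.ker (Matrix.of fun i j => ∫ ω, (S ω * Mdag ω * (S ω)ᵀ) i j ∂μ).mulVecLin
        ≤ LinearMap.ker J.mulVecLin ∧
    LinearMap.range (Jᵀ).mulVecLin
        ≤ LinearMap.range (Matrix.of fun i j => ∫ ω, (S ω * Mdag ω * (S ω)ᵀ) i j ∂μ).mulVecLin ∧
    Fx ∈ LinearMap.range (Matrix.of fun i j => ∫ ω, (S ω * Mdag ω * (S ω)ᵀ) i j ∂μ).mulVecLin := by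
  have hgram : ∀ ω, (S ω)ᵀ * Jᵀ * J * S ω = (J * S ω)ᵀ * (J * S ω) := fun ω ↦ by
    simp only [Matrix.transpose_mul, Matrix.mul_assoc]
  have hMP : ∀ ω, IsMoorePenroseInverse ((J * S ω)ᵀ * (J * S ω)) (Mdag ω) := fun ω ↦ by
    simpa only [hgram] using (⟨hpen1 ω, hpen2 ω, hpen3 ω, hpen4 ω⟩ :
      IsMoorePenroseInverse ((S ω)ᵀ * Jᵀ * J * S ω) (Mdag ω))
  have hpsd : ∀ ω, (S ω * Mdag ω * (S ω)ᵀ).PosSemidef := fun ω ↦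
    posSemidef_mul_mul_transpose (hMP ω).posSemidef_of_transpose_mul_self _
  have hkerH : ∀ ω, LinearMap.ker (S ω * Mdag ω * (S ω)ᵀ).mulVecLin
      = LinearMap.ker (S ω)ᵀ.mulVecLin := fun ω ↦
    ker_mul_mul_transpose (hMP ω).posSemidef_of_transpose_mul_self
      ((hMP ω).ker_le_ker_of_transpose_mul_self.trans
        (ker_mul_le_of_ker_le_ker_transpose (hadapt2 ω)))
  have hker : LinearMap.ker (entrywiseIntegral μ fun ω ↦ S ω * Mdag ω * (S ω)ᵀ).mulVecLin
      ≤ LinearMap.ker J.mulVecLin := by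
    intro v hv
    have hSv : ∀ᵐ ω ∂μ, (S ω)ᵀ *ᵥ v = 0 :=
      (ae_mulVec_eq_zero_of_entrywiseIntegral_mulVec_eq_zero hHint hpsd hv).mono
        fun ω h ↦ (hkerH ω).le h
    exact hadapt1 (entrywiseIntegral_mulVec_eq_zero hSint
      (hSv.mono fun ω h ↦ by rw [← mulVec_mulVec, h, mulVec_zero]))
  have hsymm : (entrywiseIntegral μ fun ω ↦ S ω * Mdag ω * (S ω)ᵀ)ᵀ
      = entrywiseIntegral μ fun ω ↦ S ω * Mdag ω * (S ω)ᵀ :=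
    (isHermitian_iff_isSymm.mp (posSemidef_entrywiseIntegral hHint hpsd).isHermitian).eq
  have hrange := hsymm ▸ range_transpose_le_range_transpose_of_ker_le hker
  exact ⟨hker, hrange, hrange hF⟩

/-- adapted sketches give the image inclusion.  `J = DF(x)`,
`H ω = S(ω) Mdag(ω) S(ω)ᵀ` with `Mdag(ω)` the Moore–Penrose pseudoinverse of
`S(ω)ᵀ Jᵀ J S(ω)`.  If `F(x) ∈ Im(Jᵀ)` and the sketch is adapted, i.e.
`Ker(E[S Sᵀ]) ⊆ Ker(J)` and `Ker(J) ⊆ Ker(Sᵀ)` for all realizations, then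
`Ker(E[H]) ⊆ Ker(J)` and hence `Im(Jᵀ) ⊆ Im(E[H])`, so `F(x) ∈ Im(E[H])`. -/
theorem adapted_sketch_image_inclusion {p m τ : ℕ} {Ω : Type*} [MeasurableSpace Ω]
    (μ : Measure Ω) [IsProbabilityMeasure μ]
    (J : Matrix (Fin p) (Fin m) ℝ) (Fx : Fin m → ℝ)
    (S : Ω → Matrix (Fin m) (Fin τ) ℝ)
    (Mdag : Ω → Matrix (Fin τ) (Fin τ) ℝ)
    (hpen1 : ∀ ω, ((S ω)ᵀ * Jᵀ * J * S ω) * Mdag ω * ((S ω)ᵀ * Jᵀ * J * S ω)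
        = (S ω)ᵀ * Jᵀ * J * S ω)
    (hpen2 : ∀ ω, Mdag ω * ((S ω)ᵀ * Jᵀ * J * S ω) * Mdag ω = Mdag ω)
    (hpen3 : ∀ ω, (((S ω)ᵀ * Jᵀ * J * S ω) * Mdag ω)ᵀ = ((S ω)ᵀ * Jᵀ * J * S ω) * Mdag ω)
    (hpen4 : ∀ ω, (Mdag ω * ((S ω)ᵀ * Jᵀ * J * S ω))ᵀ = Mdag ω * ((S ω)ᵀ * Jᵀ * J * S ω))
    (hSint : ∀ i j, Integrable (fun ω => (S ω * (S ω)ᵀ) i j) μ)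
    (hHint : ∀ i j, Integrable (fun ω => (S ω * Mdag ω * (S ω)ᵀ) i j) μ)
    (hF : Fx ∈ LinearMap.range (Jᵀ).mulVecLin)
    (hadapt1 : LinearMap.ker (Matrix.of fun i j => ∫ ω, (S ω * (S ω)ᵀ) i j ∂μ).mulVecLin
        ≤ LinearMap.ker J.mulVecLin)
    (hadapt2 : ∀ ω, LinearMap.ker J.mulVecLin ≤ LinearMap.ker ((S ω)ᵀ).mulVecLin) :
    LinearMap.ker (Matrix.of fun i j => ∫ ω, (S ω * Mdag ω * (S ω)ᵀ) i j ∂μ).mulVecLin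
        ≤ LinearMap.ker J.mulVecLin ∧
    LinearMap.range (Jᵀ).mulVecLin
        ≤ LinearMap.range (Matrix.of fun i j => ∫ ω, (S ω * Mdag ω * (S ω)ᵀ) i j ∂μ).mulVecLin ∧
    Fx ∈ LinearMap.range (Matrix.of fun i j => ∫ ω, (S ω * Mdag ω * (S ω)ᵀ) i j ∂μ).mulVecLin :=
  adapted_sketch_image_inclusion_general μ J Fx S Mdag hpen1 hpen2 hpen3 hpen4 hSint hHint hF
    hadapt1 hadapt2
end

section
/- (Co-coercivity implies sublinear full Newton–Raphson convergence) Consider x^{k+1} = x^k + γ n(x^k) with Newton direction n(x) = −(DF(x)ᵀ)† F(x) and 0 < γ < 1. If for every iterate x^k: F(x^k) ∈ Im(DF(x^k)ᵀ), and the 2-co-coercivity (1/2)‖n(x^k)‖² ≤ ⟨n(x^k), x* − x^k⟩ holds with F(x*) = 0, and ‖DF(x)‖ ≤ L on the ball {x : ‖x−x*‖ ≤ ‖x^0−x*‖}, then min_{t<k} ‖F(x^t)‖² ≤ (1/k) · L²‖x^0 − x*‖² / (γ(1 − γ)). -/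
open Matrix

/-- co-coercivity implies sublinear full Newton–Raphson convergence.
Newton direction `n(x^k) = −P_k F(x^k)` where `P_k` is the Moore–Penrose pseudoinverse of
`DF(x^k)ᵀ = (J (x k))ᵀ` (encoded by the four Penrose conditions); iteration
`x^{k+1} = x^k + γ n(x^k)` with `0 < γ < 1`.  Assuming `F(x*) = 0`,
`F(x^k) ∈ Im(DF(x^k)ᵀ)`, the 2-co-coercivity `(1/2)‖n(x^k)‖² ≤ ⟨n(x^k), x* − x^k⟩` at every
iterate, and `‖DF(z)‖ ≤ L` (as an operator bound) on the ball
`{z : ‖z − x*‖ ≤ ‖x⁰ − x*‖}`, one has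
`min_{t<k} ‖F(x^t)‖² ≤ (1/k) · L²‖x⁰ − x*‖² / (γ(1−γ))`. -/
theorem newton_raphson_cocoercive_sublinear {p m : ℕ}
    (F : (Fin p → ℝ) → (Fin m → ℝ))
    (J : (Fin p → ℝ) → Matrix (Fin p) (Fin m) ℝ)
    (P : ℕ → Matrix (Fin p) (Fin m) ℝ)
    (γ L : ℝ) (hγ0 : 0 < γ) (hγ1 : γ < 1)
    (x : ℕ → Fin p → ℝ) (xstar : Fin p → ℝ)
    (hFstar : F xstar = 0)
    (hpen1 : ∀ k, (J (x k))ᵀ * P k * (J (x k))ᵀ = (J (x k))ᵀ)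
    (hpen2 : ∀ k, P k * (J (x k))ᵀ * P k = P k)
    (hpen3 : ∀ k, ((J (x k))ᵀ * P k)ᵀ = (J (x k))ᵀ * P k)
    (hpen4 : ∀ k, (P k * (J (x k))ᵀ)ᵀ = P k * (J (x k))ᵀ)
    (hupdate : ∀ k, x (k + 1) = x k + γ • (-(P k *ᵥ F (x k))))
    (hIm : ∀ k, ∃ u : Fin p → ℝ, (J (x k))ᵀ *ᵥ u = F (x k))
    (hcoco : ∀ k, (1 / 2 : ℝ) * ((-(P k *ᵥ F (x k))) ⬝ᵥ (-(P k *ᵥ F (x k))))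
        ≤ (-(P k *ᵥ F (x k))) ⬝ᵥ (xstar - x k))
    (hL : ∀ z : Fin p → ℝ,
        (z - xstar) ⬝ᵥ (z - xstar) ≤ (x 0 - xstar) ⬝ᵥ (x 0 - xstar) →
        ∀ v : Fin m → ℝ, (J z *ᵥ v) ⬝ᵥ (J z *ᵥ v) ≤ L ^ 2 * (v ⬝ᵥ v)) :
    ∀ k : ℕ, ∀ hk : 0 < k,
      (Finset.range k).inf' (Finset.nonempty_range_iff.mpr hk.ne')
          (fun t => F (x t) ⬝ᵥ F (x t))
        ≤ (1 / (k : ℝ)) *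
            (L ^ 2 * ((x 0 - xstar) ⬝ᵥ (x 0 - xstar)) / (γ * (1 - γ))) := by
  -- abbreviations
  have selfnn : ∀ {q : ℕ} (v : Fin q → ℝ), (0:ℝ) ≤ v ⬝ᵥ v := by
    intro q v
    exact Finset.sum_nonneg fun i _ => mul_self_nonneg _
  set nvec : ℕ → Fin p → ℝ := fun t => -(P t *ᵥ F (x t)) with hnvec
  have stepA : ∀ t, (x (t+1) - xstar) ⬝ᵥ (x (t+1) - xstar)
      + γ*(1-γ) * (nvec t ⬝ᵥ nvec t) ≤ (x t - xstar) ⬝ᵥ (x t - xstar) := by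
    intro t
    have hc := hcoco t
    have hx : x (t+1) - xstar = (x t - xstar) + γ • nvec t := by
      rw [hupdate t]; abel
    rw [hx]
    have expand : ((x t - xstar) + γ • nvec t) ⬝ᵥ ((x t - xstar) + γ • nvec t)
        = (x t - xstar) ⬝ᵥ (x t - xstar) + 2*γ*((x t - xstar) ⬝ᵥ nvec t)
          + γ^2 * (nvec t ⬝ᵥ nvec t) := by
      simp only [add_dotProduct, dotProduct_add, smul_dotProduct, dotProduct_smul,
        smul_eq_mul, dotProduct_comm (nvec t) (x t - xstar)]
      ring
    rw [expand]
    have e2 : (xstar - x t) = -(x t - xstar) := by abel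
    have e1 : nvec t ⬝ᵥ (xstar - x t) = -((x t - xstar) ⬝ᵥ nvec t) := by
      rw [e2, dotProduct_neg, dotProduct_comm]
    rw [e1] at hc
    have hkey : (0:ℝ) ≤ γ * (-((x t - xstar) ⬝ᵥ nvec t) - (1/2) * (nvec t ⬝ᵥ nvec t)) :=
      mul_nonneg hγ0.le (by linarith)
    nlinarith [hkey]
  have monoB : ∀ t, (x t - xstar) ⬝ᵥ (x t - xstar) ≤ (x 0 - xstar) ⬝ᵥ (x 0 - xstar) := by
    intro t
    induction t with
    | zero => exact le_refl _
    | succ t ih =>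
      have h1 := stepA t
      have h2 : (0:ℝ) ≤ γ*(1-γ) * (nvec t ⬝ᵥ nvec t) :=
        mul_nonneg (mul_nonneg hγ0.le (by linarith)) (selfnn _)
      linarith
  have stepD : ∀ t, F (x t) ⬝ᵥ F (x t) ≤ L^2 * (nvec t ⬝ᵥ nvec t) := by
    intro t
    obtain ⟨u, hu⟩ := hIm t
    set A := J (x t) with hA
    set w := P t *ᵥ F (x t) with hw
    set s := F (x t) with hs
    have hF : Aᵀ *ᵥ w = s := by
      rw [hw, ← hu, mulVec_mulVec, mulVec_mulVec, hA, hpen1 t]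
    have hnn : nvec t ⬝ᵥ nvec t = w ⬝ᵥ w := by
      show (-(P t *ᵥ F (x t))) ⬝ᵥ (-(P t *ᵥ F (x t))) = _
      rw [neg_dotProduct_neg]
    have hdot : s ⬝ᵥ s = w ⬝ᵥ (A *ᵥ s) := by
      rw [dotProduct_mulVec, ← mulVec_transpose, hF]
    have CS : (w ⬝ᵥ (A *ᵥ s))^2 ≤ (w ⬝ᵥ w) * ((A *ᵥ s) ⬝ᵥ (A *ᵥ s)) := by
      have h := Finset.sum_mul_sq_le_sq_mul_sq Finset.univ w (A *ᵥ s)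
      simpa [dotProduct, pow_two] using h
    have hball := hL (x t) (monoB t) s
    rw [hnn]
    rcases (selfnn s).lt_or_eq with hpos | hzero
    · have h1 : (s ⬝ᵥ s) * (s ⬝ᵥ s) ≤ (L^2 * (w ⬝ᵥ w)) * (s ⬝ᵥ s) := by
        have h2 : (w ⬝ᵥ w) * ((A *ᵥ s) ⬝ᵥ (A *ᵥ s)) ≤ (w ⬝ᵥ w) * (L^2 * (s ⬝ᵥ s)) :=
          mul_le_mul_of_nonneg_left hball (selfnn w)
        calc (s ⬝ᵥ s) * (s ⬝ᵥ s) = (w ⬝ᵥ (A *ᵥ s))^2 := by rw [← hdot]; ring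
          _ ≤ (w ⬝ᵥ w) * ((A *ᵥ s) ⬝ᵥ (A *ᵥ s)) := CS
          _ ≤ (w ⬝ᵥ w) * (L^2 * (s ⬝ᵥ s)) := h2
          _ = (L^2 * (w ⬝ᵥ w)) * (s ⬝ᵥ s) := by ring
      exact le_of_mul_le_mul_right h1 hpos
    · rw [← hzero]
      exact mul_nonneg (sq_nonneg L) (selfnn w)
  have tele : ∀ k, γ*(1-γ) * (∑ t ∈ Finset.range k, nvec t ⬝ᵥ nvec t)
      + (x k - xstar) ⬝ᵥ (x k - xstar) ≤ (x 0 - xstar) ⬝ᵥ (x 0 - xstar) := by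
    intro k
    induction k with
    | zero => simp
    | succ k ih =>
      rw [Finset.sum_range_succ, mul_add]
      have := stepA k
      linarith
  intro k hk
  have hkpos : (0:ℝ) < (k:ℝ) := by exact_mod_cast hk
  have hγγ : (0:ℝ) < γ * (1 - γ) := mul_pos hγ0 (by linarith)
  set D := (x 0 - xstar) ⬝ᵥ (x 0 - xstar) with hD
  set I := (Finset.range k).inf' (Finset.nonempty_range_iff.mpr hk.ne')
      (fun t => F (x t) ⬝ᵥ F (x t)) with hI
  have hsum1 : (k:ℝ) * I ≤ ∑ t ∈ Finset.range k, F (x t) ⬝ᵥ F (x t) := by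
    have h := Finset.card_nsmul_le_sum (Finset.range k)
      (fun t => F (x t) ⬝ᵥ F (x t)) I (fun t ht => Finset.inf'_le _ ht)
    simpa [Finset.card_range, nsmul_eq_mul] using h
  have hsum2 : ∑ t ∈ Finset.range k, F (x t) ⬝ᵥ F (x t)
      ≤ L^2 * ∑ t ∈ Finset.range k, nvec t ⬝ᵥ nvec t := by
    rw [Finset.mul_sum]
    exact Finset.sum_le_sum fun t _ => stepD t
  have hsum3 : ∑ t ∈ Finset.range k, nvec t ⬝ᵥ nvec t ≤ D / (γ * (1 - γ)) := by
    rw [le_div_iff₀ hγγ]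
    have := tele k
    have hnn := selfnn (x k - xstar)
    nlinarith [this, hnn]
  have hsum4 : L^2 * ∑ t ∈ Finset.range k, nvec t ⬝ᵥ nvec t
      ≤ L^2 * (D / (γ * (1 - γ))) := mul_le_mul_of_nonneg_left hsum3 (sq_nonneg L)
  have hfin : (k:ℝ) * I ≤ L^2 * D / (γ * (1 - γ)) := by
    rw [mul_div_assoc]
    linarith
  calc I = (1/(k:ℝ)) * ((k:ℝ) * I) := by field_simp
    _ ≤ (1/(k:ℝ)) * (L^2 * D / (γ * (1 - γ))) := by
        apply mul_le_mul_of_nonneg_left hfin (by positivity)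
end
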